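/- Let α be irrational such that q_{n+1}/q_n → ∞ (equivalently a_n → ∞), let 0 < δ < 1/2, and let x ∈ (0,1) satisfy ‖q_ℓ x‖ > δ for all sufficiently large ℓ. Then liminf_{|k|→∞} |k|·‖kα − x‖ ≥ δ²/4. -/

import Mathlib

open Filter MeasureTheory

/-- Distance from a real number to the nearest integer. -/
noncomputable def nint (x : ℝ) : ℝ := |x - round x|

/-- The denominator `q_k` of the `k`-th continued fraction convergent of `α`. -/
noncomputable def cfDen (α : ℝ) (k : ℕ) : ℝ := (GenContFract.of α).dens k

/-!
For integers `k` and `y`, `‖y x‖ ≤ |y| ‖k α - x‖ + |k| ‖y α‖`. Given `k`, choose `ℓ` with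
`q_ℓ ≤ 2|k|/δ < q_{ℓ+1}`: then `|k| ‖q_ℓ α‖ ≤ |k| / q_{ℓ+1} < δ/2`, while `‖q_ℓ x‖ > δ`, so
`q_ℓ ‖k α - x‖ > δ/2` and `|k| ‖k α - x‖ > δ²/4`.

`liminf` on `ℝ` is only meaningful if `|k| ‖k α - x‖` is also bounded along infinitely many `k`.
Such `k` come from the greedy (Ostrowski) expansion `k = Σ m_n q_n`, correcting the error
`k α - x` by multiples of `q_n α - p_n`: since `a_n → ∞`, eventually
`|q_{n+1} α - p_{n+1}| ≤ |q_n α - p_n| / 4`, which keeps `|k| |q_n α - p_n|` bounded. Their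
errors `‖k α - x‖` tend to `0`, so they leave every finite set, as `‖k α - x‖ > 0` for every `k`:
otherwise `δ < ‖q_ℓ x‖ ≤ |k| ‖q_ℓ α‖ → 0`.
-/

open Topology

lemma nint_nonneg (z : ℝ) : 0 ≤ nint z := abs_nonneg _

lemma nint_le_half (z : ℝ) : nint z ≤ 1 / 2 := abs_sub_round z

lemma nint_le_abs_sub_intCast (z : ℝ) (m : ℤ) : nint z ≤ |z - m| := round_le z m

lemma nint_intCast_mul_le (α x : ℝ) (k y : ℤ) :
    nint (y * x) ≤ |(y : ℝ)| * nint (k * α - x) + |(k : ℝ)| * nint (y * α) := by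
  calc nint (y * x)
      ≤ |k * (y * α - round ((y : ℝ) * α)) - y * (k * α - x - round ((k : ℝ) * α - x))| := by
        convert nint_le_abs_sub_intCast ((y : ℝ) * x)
          (k * round ((y : ℝ) * α) - y * round ((k : ℝ) * α - x)) using 2
        push_cast
        ring
    _ ≤ |(y : ℝ)| * nint (k * α - x) + |(k : ℝ)| * nint (y * α) := by
        rw [add_comm]
        refine (abs_sub _ _).trans_eq ?_
        rw [abs_mul, abs_mul]
        rfl

lemma sq_div_four_le_abs_mul_nint (α x : ℝ) {δ : ℝ} (hδ0 : 0 < δ) (k y : ℤ)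
    (hyx : δ < nint (y * x)) (hyα : 2 * |(k : ℝ)| * nint (y * α) < δ)
    (hy : δ * |(y : ℝ)| ≤ 2 * |(k : ℝ)|) :
    δ ^ 2 / 4 ≤ |(k : ℝ)| * nint (k * α - x) := by
  have hkey := nint_intCast_mul_le α x k y
  have hN := nint_nonneg (k * α - x)
  have hyN : δ / 2 < |(y : ℝ)| * nint (k * α - x) := by linarith
  nlinarith [mul_le_mul_of_nonneg_right hy hN]

lemma nint_mul_sub_pos_of_tendsto (α x : ℝ) {δ : ℝ} (hδ0 : 0 < δ) (y : ℕ → ℤ)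
    (hyα : Tendsto (fun n => nint (y n * α)) atTop (𝓝 0))
    (hyx : ∀ᶠ n in atTop, δ < nint (y n * x)) (k : ℤ) : 0 < nint (k * α - x) := by
  refine (nint_nonneg _).lt_of_ne fun hk => ?_
  have hsmall : ∀ᶠ n in atTop, |(k : ℝ)| * nint (y n * α) < δ := by
    have := hyα.const_mul |(k : ℝ)|
    rw [mul_zero] at this
    exact this.eventually (gt_mem_nhds hδ0)
  obtain ⟨n, hn, hn'⟩ := (hyx.and hsmall).exists
  have := nint_intCast_mul_le α x k (y n)
  rw [← hk, mul_zero, zero_add] at this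
  linarith

lemma exists_int_abs_add_mul_le (r β : ℝ) (hβ : β ≠ 0) :
    ∃ m : ℤ, |r + m * β| ≤ |β| / 2 ∧ |(m : ℝ)| * |β| ≤ |r| + |β| / 2 := by
  have hround := abs_sub_round (r / β)
  refine ⟨-round (r / β), ?_, ?_⟩
  · have h : r + ((-round (r / β) : ℤ) : ℝ) * β = β * (r / β - round (r / β)) := by
      push_cast
      field_simp
      ring
    rw [h, abs_mul]
    calc |β| * |r / β - round (r / β)| ≤ |β| * (1 / 2) := by gcongr
      _ = |β| / 2 := by ring
  · have h : |(round (r / β) : ℝ)| ≤ |r / β| + 1 / 2 := by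
      have := abs_sub_abs_le_abs_sub (round (r / β) : ℝ) (r / β)
      rw [abs_sub_comm] at this
      linarith
    push_cast
    rw [abs_neg]
    calc |(round (r / β) : ℝ)| * |β| ≤ (|r / β| + 1 / 2) * |β| := by gcongr
      _ = |r| + |β| / 2 := by
        rw [abs_div, add_mul, div_mul_cancel₀ _ (abs_ne_zero.mpr hβ)]
        ring

lemma exists_int_nint_mul_sub_le_half (α x : ℝ) (q p k : ℤ) (β : ℝ) (hβ : β = q * α - p)
    (hβ0 : β ≠ 0) :
    ∃ k' : ℤ, nint (k' * α - x) ≤ |β| / 2 ∧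
      |(k' : ℝ)| * |β| ≤ |(k : ℝ)| * |β| + |(q : ℝ)| * (nint (k * α - x) + |β| / 2) := by
  obtain ⟨m, hm, hm'⟩ := exists_int_abs_add_mul_le ((k : ℝ) * α - x - round ((k : ℝ) * α - x)) β hβ0
  refine ⟨k + m * q, ?_, ?_⟩
  · calc nint ((k + m * q : ℤ) * α - x)
        ≤ |(k + m * q : ℤ) * α - x - (round ((k : ℝ) * α - x) + m * p : ℤ)| :=
          nint_le_abs_sub_intCast _ _
      _ = |(k : ℝ) * α - x - round ((k : ℝ) * α - x) + m * β| := by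
          rw [hβ]
          push_cast
          ring_nf
      _ ≤ |β| / 2 := hm
  · calc |((k + m * q : ℤ) : ℝ)| * |β| ≤ (|(k : ℝ)| + |(m : ℝ)| * |(q : ℝ)|) * |β| := by
          gcongr
          push_cast
          exact (abs_add_le _ _).trans_eq (by rw [abs_mul])
      _ = |(k : ℝ)| * |β| + |(q : ℝ)| * (|(m : ℝ)| * |β|) := by ring
      _ ≤ |(k : ℝ)| * |β| + |(q : ℝ)| * (nint (k * α - x) + |β| / 2) := by
          gcongr
          exact hm'

lemma exists_int_nint_mul_sub_le_of_abs_le_div_four (α x : ℝ) (q p : ℕ → ℤ) (β : ℕ → ℝ)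
    (hβ : ∀ n, β n = q n * α - p n) (hβ0 : ∀ n, β n ≠ 0) (hβ1 : |β 0| ≤ 1)
    (hdec : ∀ n, |β (n + 1)| ≤ |β n| / 4) (hqβ : ∀ n, |(q (n + 1) : ℝ)| * |β n| ≤ 1) (n : ℕ) :
    ∃ k : ℤ, nint (k * α - x) ≤ |β n| / 2 ∧ |(k : ℝ)| * |β n| ≤ max |(q 0 : ℝ)| 1 := by
  induction n with
  | zero =>
    obtain ⟨k, hk, hk'⟩ := exists_int_nint_mul_sub_le_half α x (q 0) (p 0) 0 _ (hβ 0) (hβ0 0)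
    refine ⟨k, hk, hk'.trans ?_⟩
    have := nint_le_half (-x)
    calc |((0 : ℤ) : ℝ)| * |β 0| + |(q 0 : ℝ)| * (nint ((0 : ℤ) * α - x) + |β 0| / 2)
        ≤ |(q 0 : ℝ)| * (1 / 2 + 1 / 2) := by
          simp only [Int.cast_zero, abs_zero, zero_mul, zero_add, zero_sub]
          gcongr
      _ ≤ max |(q 0 : ℝ)| 1 := by norm_num
  | succ n ih =>
    obtain ⟨k, hk, hk'⟩ := ih
    obtain ⟨k', hk₁, hk₂⟩ :=
      exists_int_nint_mul_sub_le_half α x (q (n + 1)) (p (n + 1)) k _ (hβ _) (hβ0 _)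
    refine ⟨k', hk₁, hk₂.trans ?_⟩
    have hd := hdec n
    have hq := hqβ n
    calc |(k : ℝ)| * |β (n + 1)| + |(q (n + 1) : ℝ)| * (nint (k * α - x) + |β (n + 1)| / 2)
        ≤ |(k : ℝ)| * (|β n| / 4) + |(q (n + 1) : ℝ)| * (|β n| / 2 + |β n| / 4 / 2) := by
          gcongr
      _ = (|(k : ℝ)| * |β n|) / 4 + 5 / 8 * (|(q (n + 1) : ℝ)| * |β n|) := by ring
      _ ≤ max |(q 0 : ℝ)| 1 / 4 + 5 / 8 * 1 := by gcongr
      _ ≤ max |(q 0 : ℝ)| 1 := by linarith [le_max_right |(q 0 : ℝ)| 1]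

lemma tendsto_cofinite_of_tendsto_nhds_zero {ι κ : Type*} {l : Filter κ} {g : ι → ℝ}
    (hg : ∀ i, 0 < g i) {k : κ → ι} (h : Tendsto (g ∘ k) l (𝓝 0)) : Tendsto k l cofinite :=
  le_cofinite_iff_compl_singleton_mem.mpr fun i =>
    (h.eventually (gt_mem_nhds (hg i))).mono fun _ hlt hki => hlt.ne (by rw [← hki]; rfl)

lemma frequently_abs_mul_nint_le_of_abs_le_div_four (α x : ℝ)
    (hpos : ∀ k : ℤ, 0 < nint (k * α - x)) (q p : ℕ → ℤ) (β : ℕ → ℝ)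
    (hβ : ∀ n, β n = q n * α - p n) (hβ0 : ∀ n, β n ≠ 0) (hβ1 : |β 0| ≤ 1)
    (hdec : ∀ n, |β (n + 1)| ≤ |β n| / 4) (hqβ : ∀ n, |(q (n + 1) : ℝ)| * |β n| ≤ 1) :
    ∃ᶠ k : ℤ in cofinite, |(k : ℝ)| * nint (k * α - x) ≤ max |(q 0 : ℝ)| 1 / 2 := by
  choose k hk hk' using
    exists_int_nint_mul_sub_le_of_abs_le_div_four α x q p β hβ hβ0 hβ1 hdec hqβ
  have hβlim : Tendsto (fun n => |β n|) atTop (𝓝 0) := by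
    refine squeeze_zero (fun n => abs_nonneg _)
      (fun n => le_geom (u := fun n => |β n|) (c := 1 / 4) (by norm_num) n
        fun k _ => (hdec k).trans_eq (by ring)) ?_
    simpa using (tendsto_pow_atTop_nhds_zero_of_lt_one (by norm_num : (0 : ℝ) ≤ 1 / 4)
      (by norm_num)).mul_const |β 0|
  have hk_tendsto : Tendsto k atTop cofinite := by
    refine tendsto_cofinite_of_tendsto_nhds_zero hpos ?_
    have := hβlim.div_const 2
    rw [zero_div] at this
    exact squeeze_zero (fun n => nint_nonneg _) hk this
  refine hk_tendsto.frequently (Frequently.of_forall fun n => ?_)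
  calc |(k n : ℝ)| * nint (k n * α - x) ≤ |(k n : ℝ)| * (|β n| / 2) := by gcongr; exact hk n
    _ = (|(k n : ℝ)| * |β n|) / 2 := by ring
    _ ≤ max |(q 0 : ℝ)| 1 / 2 := by gcongr; exact hk' n

lemma exists_le_lt_succ_of_tendsto_atTop {β : Type*} [LinearOrder β] [NoMaxOrder β] {u : ℕ → β}
    (hu : Tendsto u atTop atTop) {L : ℕ} {t : β} (ht : u L ≤ t) :
    ∃ ℓ, L ≤ ℓ ∧ u ℓ ≤ t ∧ t < u (ℓ + 1) := by
  classical
  have hex : ∃ n, t < u (L + n + 1) := by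
    obtain ⟨N, hN⟩ := eventually_atTop.mp (hu.eventually_gt_atTop t)
    exact ⟨N, hN _ (by omega)⟩
  refine ⟨L + Nat.find hex, by omega, ?_, Nat.find_spec hex⟩
  rcases h : Nat.find hex with _ | m
  · simpa using ht
  · have := Nat.find_min hex (h ▸ m.lt_succ_self : m < Nat.find hex)
    rw [not_lt] at this
    simpa [add_assoc] using this

noncomputable def cfNum (α : ℝ) (k : ℕ) : ℝ := (GenContFract.of α).nums k

section Irrational

variable {α : ℝ}

lemma Irrational.genContFract_not_terminatedAt (hα : Irrational α) (n : ℕ) :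
    ¬(GenContFract.of α).TerminatedAt n := fun h =>
  have ⟨q, hq⟩ := (GenContFract.terminates_iff_rat α).mp ⟨n, h⟩
  hα ⟨q, hq.symm⟩

lemma exists_int_cfNum_eq_and_cfDen_eq (hα : Irrational α) (n : ℕ) :
    (∃ p : ℤ, cfNum α n = p) ∧ ∃ q : ℤ, cfDen α n = q := by
  induction n using Nat.twoStepInduction with
  | zero =>
    refine ⟨⟨⌊α⌋, ?_⟩, ⟨1, ?_⟩⟩
    · rw [cfNum, GenContFract.zeroth_num_eq_h, GenContFract.of_h_eq_floor]
    · rw [cfDen, GenContFract.zeroth_den_eq_one, Int.cast_one]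
  | one =>
    obtain ⟨gp, hgp⟩ := Option.ne_none_iff_exists'.1 (hα.genContFract_not_terminatedAt 0)
    have ha : gp.a = 1 := GenContFract.of_partNum_eq_one (GenContFract.partNum_eq_s_a hgp)
    obtain ⟨z, hz⟩ := (GenContFract.of_partNum_eq_one_and_exists_int_partDen_eq hgp).2
    refine ⟨⟨z * ⌊α⌋ + 1, ?_⟩, ⟨z, ?_⟩⟩
    · rw [cfNum, GenContFract.first_num_eq hgp, ha, GenContFract.of_h_eq_floor, hz]
      push_cast
      ring
    · rw [cfDen, GenContFract.first_den_eq hgp, hz]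
  | more n ih₀ ih₁ =>
    obtain ⟨gp, hgp⟩ := Option.ne_none_iff_exists'.1 (hα.genContFract_not_terminatedAt (n + 1))
    have ha : gp.a = 1 := GenContFract.of_partNum_eq_one (GenContFract.partNum_eq_s_a hgp)
    obtain ⟨z, hz⟩ := (GenContFract.of_partNum_eq_one_and_exists_int_partDen_eq hgp).2
    obtain ⟨⟨p₀, hp₀⟩, ⟨q₀, hq₀⟩⟩ := ih₀
    obtain ⟨⟨p₁, hp₁⟩, ⟨q₁, hq₁⟩⟩ := ih₁
    refine ⟨⟨z * p₁ + p₀, ?_⟩, ⟨z * q₁ + q₀, ?_⟩⟩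
    · rw [cfNum, GenContFract.nums_recurrence hgp hp₀ hp₁, ha, hz]
      push_cast
      ring
    · rw [cfDen, GenContFract.dens_recurrence hgp hq₀ hq₁, ha, hz]
      push_cast
      ring

lemma fib_succ_le_cfDen (hα : Irrational α) (n : ℕ) : (Nat.fib (n + 1) : ℝ) ≤ cfDen α n :=
  GenContFract.succ_nth_fib_le_of_nth_den (Or.inr (hα.genContFract_not_terminatedAt _))

lemma one_le_cfDen (hα : Irrational α) (n : ℕ) : 1 ≤ cfDen α n :=
  (fib_succ_le_cfDen hα n).trans' (mod_cast Nat.fib_pos.mpr n.succ_pos)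

lemma cfDen_pos (hα : Irrational α) (n : ℕ) : 0 < cfDen α n :=
  zero_lt_one.trans_le (one_le_cfDen hα n)

lemma tendsto_cfDen_atTop (hα : Irrational α) : Tendsto (cfDen α) atTop atTop := by
  refine tendsto_atTop_mono (fun n => ?_) (tendsto_natCast_atTop_atTop (R := ℝ))
  have := Nat.le_fib_add_one (n + 1)
  exact le_trans (by exact_mod_cast (by omega : n ≤ Nat.fib (n + 1))) (fib_succ_le_cfDen hα n)

lemma abs_cfDen_mul_sub_cfNum_le (hα : Irrational α) (n : ℕ) :
    |cfDen α n * α - cfNum α n| ≤ 1 / cfDen α (n + 1) := by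
  have h := GenContFract.abs_sub_convs_le (hα.genContFract_not_terminatedAt n)
  rw [GenContFract.conv_eq_num_div_den] at h
  have hq := cfDen_pos hα n
  calc |cfDen α n * α - cfNum α n| = cfDen α n * |α - cfNum α n / cfDen α n| := by
        rw [← abs_of_pos hq, ← abs_mul, abs_of_pos hq, mul_sub, mul_div_cancel₀ _ hq.ne']
    _ ≤ cfDen α n * (1 / (cfDen α n * cfDen α (n + 1))) := by gcongr; exact h
    _ = 1 / cfDen α (n + 1) := by field_simp

lemma cfDen_mul_sub_cfNum_ne_zero (hα : Irrational α) (n : ℕ) : cfDen α n * α - cfNum α n ≠ 0 := by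
  obtain ⟨⟨p, hp⟩, ⟨q, hq⟩⟩ := exists_int_cfNum_eq_and_cfDen_eq hα n
  intro h
  have hq0 : (q : ℝ) ≠ 0 := hq ▸ (cfDen_pos hα n).ne'
  refine hα ⟨p / q, ?_⟩
  rw [hp, hq] at h
  push_cast
  rw [div_eq_iff hq0]
  linarith

lemma one_le_cfDen_succ_mul_add_cfDen_mul (hα : Irrational α) (n : ℕ) :
    1 ≤ cfDen α (n + 1) * |cfDen α n * α - cfNum α n| +
      cfDen α n * |cfDen α (n + 1) * α - cfNum α (n + 1)| := by
  have h : cfNum α n * cfDen α (n + 1) - cfDen α n * cfNum α (n + 1) = (-1) ^ (n + 1) :=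
    SimpContFract.determinant (s := SimpContFract.of α) (hα.genContFract_not_terminatedAt n)
  calc (1 : ℝ) = |cfDen α n * (cfDen α (n + 1) * α - cfNum α (n + 1)) -
        cfDen α (n + 1) * (cfDen α n * α - cfNum α n)| := by
        rw [← abs_neg_one_pow (n + 1), ← h]
        congr 1
        ring
    _ ≤ _ := by
        refine (abs_sub _ _).trans_eq ?_
        rw [abs_mul, abs_mul, abs_of_pos (cfDen_pos hα _), abs_of_pos (cfDen_pos hα _), add_comm]

lemma abs_cfDen_succ_mul_sub_cfNum_le_div_four (hα : Irrational α) (n : ℕ)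
    (h₀ : 8 * cfDen α n ≤ cfDen α (n + 1)) (h₁ : 8 * cfDen α (n + 1) ≤ cfDen α (n + 2)) :
    |cfDen α (n + 1) * α - cfNum α (n + 1)| ≤ |cfDen α n * α - cfNum α n| / 4 := by
  set d₀ := |cfDen α n * α - cfNum α n|
  set d₁ := |cfDen α (n + 1) * α - cfNum α (n + 1)|
  have hq₁ := cfDen_pos hα (n + 1)
  have hq₂ := cfDen_pos hα (n + 2)
  have hd₁ : d₁ * cfDen α (n + 2) ≤ 1 := (le_div_iff₀ hq₂).mp (abs_cfDen_mul_sub_cfNum_le hα _)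
  have hd₁0 : 0 ≤ d₁ := abs_nonneg _
  have hq₀d₁ : cfDen α n * d₁ ≤ 1 / 64 := by nlinarith
  have hq₁d₁ : cfDen α (n + 1) * d₁ ≤ 1 / 8 := by nlinarith
  have hq₁d₀ : 63 / 64 ≤ cfDen α (n + 1) * d₀ := by
    linarith [one_le_cfDen_succ_mul_add_cfDen_mul hα n]
  rw [le_div_iff₀ four_pos]
  exact le_of_mul_le_mul_left (by linarith) hq₁

lemma nint_cfDen_mul_le (hα : Irrational α) (n : ℕ) :
    nint (cfDen α n * α) ≤ 1 / cfDen α (n + 1) := by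
  obtain ⟨⟨p, hp⟩, -⟩ := exists_int_cfNum_eq_and_cfDen_eq hα n
  exact (nint_le_abs_sub_intCast _ p).trans (hp ▸ abs_cfDen_mul_sub_cfNum_le hα n)

lemma tendsto_nint_cfDen_mul (hα : Irrational α) :
    Tendsto (fun n => nint (cfDen α n * α)) atTop (𝓝 0) := by
  refine squeeze_zero (fun n => nint_nonneg _) (nint_cfDen_mul_le hα) ?_
  exact ((tendsto_cfDen_atTop hα).comp (tendsto_add_atTop_nat 1)).inv_tendsto_atTop.congr
    fun n => (one_div _).symm

lemma nint_mul_sub_pos (hα : Irrational α) {x δ : ℝ} (hδ0 : 0 < δ)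
    (hxδ : ∀ᶠ ℓ in atTop, δ < nint (cfDen α ℓ * x)) (k : ℤ) : 0 < nint (k * α - x) := by
  choose q hq using fun n => (exists_int_cfNum_eq_and_cfDen_eq hα n).2
  refine nint_mul_sub_pos_of_tendsto α x hδ0 q ?_ (by simpa only [hq] using hxδ) k
  simpa only [hq] using tendsto_nint_cfDen_mul hα

lemma eventually_sq_div_four_le_abs_mul_nint (hα : Irrational α) {x δ : ℝ} (hδ0 : 0 < δ)
    (hxδ : ∀ᶠ ℓ in atTop, δ < nint (cfDen α ℓ * x)) :
    ∀ᶠ k : ℤ in cofinite, δ ^ 2 / 4 ≤ |(k : ℝ)| * nint (k * α - x) := by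
  obtain ⟨L, hL⟩ := eventually_atTop.mp hxδ
  have hlarge : ∀ᶠ k : ℤ in cofinite, δ * cfDen α L / 2 ≤ |(k : ℝ)| :=
    (tendsto_norm_cocompact_atTop.comp Int.tendsto_coe_cofinite).eventually_ge_atTop _
  refine hlarge.mono fun k hk => ?_
  obtain ⟨ℓ, hLℓ, hℓ, hℓ'⟩ := exists_le_lt_succ_of_tendsto_atTop (tendsto_cfDen_atTop hα)
    (t := 2 * |(k : ℝ)| / δ) (by rw [le_div_iff₀ hδ0]; linarith)
  rw [le_div_iff₀ hδ0] at hℓ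
  rw [div_lt_iff₀ hδ0] at hℓ'
  obtain ⟨-, ⟨q, hq⟩⟩ := exists_int_cfNum_eq_and_cfDen_eq hα ℓ
  refine sq_div_four_le_abs_mul_nint α x hδ0 k q (hq ▸ hL ℓ hLℓ) ?_ ?_
  · rw [← hq]
    calc 2 * |(k : ℝ)| * nint (cfDen α ℓ * α) ≤ 2 * |(k : ℝ)| * (1 / cfDen α (ℓ + 1)) := by
          gcongr
          exact nint_cfDen_mul_le hα ℓ
      _ < δ := by
          rw [mul_one_div, div_lt_iff₀ (cfDen_pos hα _)]
          linarith
  · rw [← hq, abs_of_pos (cfDen_pos hα ℓ)]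
    linarith

lemma frequently_abs_mul_nint_le (hα : Irrational α)
    (hq : Tendsto (fun n : ℕ => cfDen α (n + 1) / cfDen α n) atTop atTop) {x : ℝ}
    (hpos : ∀ k : ℤ, 0 < nint (k * α - x)) :
    ∃ M, ∃ᶠ k : ℤ in cofinite, |(k : ℝ)| * nint (k * α - x) ≤ M := by
  obtain ⟨L, hL⟩ := eventually_atTop.mp (hq.eventually_ge_atTop 8)
  have h8 : ∀ n, 8 * cfDen α (L + n) ≤ cfDen α (L + n + 1) := fun n => by
    have := hL (L + n) (by omega)
    rwa [le_div_iff₀ (cfDen_pos hα _)] at this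
  choose P hP using fun n => (exists_int_cfNum_eq_and_cfDen_eq hα n).1
  choose Q hQ using fun n => (exists_int_cfNum_eq_and_cfDen_eq hα n).2
  refine ⟨_, frequently_abs_mul_nint_le_of_abs_le_div_four α x hpos (fun n => Q (L + n))
    (fun n => P (L + n)) (fun n => cfDen α (L + n) * α - cfNum α (L + n))
    (fun n => by rw [hP, hQ]) (fun n => cfDen_mul_sub_cfNum_ne_zero hα _) ?_
    (fun n => abs_cfDen_succ_mul_sub_cfNum_le_div_four hα _ (h8 n) (h8 (n + 1))) fun n => ?_⟩
  · refine (abs_cfDen_mul_sub_cfNum_le hα L).trans ?_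
    rw [div_le_one (cfDen_pos hα _)]
    exact one_le_cfDen hα _
  · rw [← hQ, abs_of_pos (cfDen_pos hα _)]
    have := abs_cfDen_mul_sub_cfNum_le hα (L + n)
    rwa [le_div_iff₀ (cfDen_pos hα _), mul_comm] at this

end Irrational

theorem stmt13_general (α : ℝ) (hα : Irrational α)
    (hq : Tendsto (fun n : ℕ => cfDen α (n + 1) / cfDen α n) atTop atTop)
    (δ : ℝ) (hδ0 : 0 < δ)
    (x : ℝ)
    (hxδ : ∀ᶠ ℓ in atTop, δ < nint (cfDen α ℓ * x)) :
    δ ^ 2 / 4 ≤ Filter.liminf (fun k : ℤ => |(k : ℝ)| * nint (k * α - x)) Filter.cofinite := by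
  obtain ⟨M, hM⟩ := frequently_abs_mul_nint_le hα hq (nint_mul_sub_pos hα hδ0 hxδ)
  exact le_liminf_of_le (IsCoboundedUnder.of_frequently_le hM)
    (eventually_sq_div_four_le_abs_mul_nint hα hδ0 hxδ)

theorem stmt13 (α : ℝ) (hα : Irrational α)
    (hq : Tendsto (fun n : ℕ => cfDen α (n + 1) / cfDen α n) atTop atTop)
    (δ : ℝ) (hδ0 : 0 < δ) (hδ : δ < 1 / 2)
    (x : ℝ) (hx : x ∈ Set.Ioo (0 : ℝ) 1)
    (hxδ : ∀ᶠ ℓ in atTop, δ < nint (cfDen α ℓ * x)) :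
    δ ^ 2 / 4 ≤ Filter.liminf (fun k : ℤ => |(k : ℝ)| * nint (k * α - x)) Filter.cofinite :=
  stmt13_general α hα hq δ hδ0 x hxδ
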